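/- arXiv:1603.03472 — 2 statements merged into one kernel-verified Lean document; each statement's English description precedes it below -/
import Mathlib

section
/- Suppose T is a group and let Φ be the class of all 𝔥-homogeneous functions X → L. Then for every f : X → L the following three statements are equivalent: (1) f is 𝔥-homogeneous; (2) the lower Φ-envelope lE_Φ f equals f; (3) the upper Φ-envelope uE_Φ f equals f. (Theorem 1, group part.) -/
/-!
A monotone action of a group is an action by order automorphisms, since `t⁻¹` acts as a
monotone inverse of `t`. Hence it commutes with arbitrary suprema and infima, so pointwise
suprema and infima of homogeneous functions are homogeneous; in particular both envelopes
are homogeneous. Conversely a homogeneous `f` is the largest homogeneous minorant and the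
smallest homogeneous majorant of itself.
-/

/-- `f : X → L` is `𝔥`-homogeneous: `f (h • x) = 𝔥 h • f x`. -/
def IsHomog {H T X L : Type*} [Monoid H] [Monoid T] [MulAction H X]
    [SMul T L] (𝔥 : H →* T) (f : X → L) : Prop :=
  ∀ (h : H) (x : X), f (h • x) = 𝔥 h • f x

/-- The lower `Φ`-envelope `lE_Φ f : x ↦ ⨆ {φ x | φ ∈ Φ, φ ≤ f}`. -/
def lowE {X L : Type*} [CompleteLattice L] (Φ : Set (X → L)) (f : X → L) : X → L :=
  fun x => ⨆ φ ∈ {φ ∈ Φ | φ ≤ f}, φ x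

/-- The upper `Φ`-envelope `uE_Φ f : x ↦ ⨅ {φ x | φ ∈ Φ, f ≤ φ}`. -/
def uppE {X L : Type*} [CompleteLattice L] (Φ : Set (X → L)) (f : X → L) : X → L :=
  fun x => ⨅ φ ∈ {φ ∈ Φ | f ≤ φ}, φ x

section Envelope

variable {X L : Type*} [CompleteLattice L] {Φ : Set (X → L)} {f : X → L}

theorem lowE_eq_iSup : lowE Φ f = ⨆ φ ∈ {φ ∈ Φ | φ ≤ f}, φ := by
  funext x
  simp only [lowE, iSup_apply]

theorem uppE_eq_iInf : uppE Φ f = ⨅ φ ∈ {φ ∈ Φ | f ≤ φ}, φ := by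
  funext x
  simp only [uppE, iInf_apply]

theorem lowE_eq_self_of_mem (hf : f ∈ Φ) : lowE Φ f = f :=
  le_antisymm (by rw [lowE_eq_iSup]; exact iSup₂_le fun _ hφ => hφ.2)
    (by rw [lowE_eq_iSup]; exact le_iSup₂_of_le f ⟨hf, le_rfl⟩ le_rfl)

theorem uppE_eq_self_of_mem (hf : f ∈ Φ) : uppE Φ f = f :=
  le_antisymm (by rw [uppE_eq_iInf]; exact iInf₂_le_of_le f ⟨hf, le_rfl⟩ le_rfl)
    (by rw [uppE_eq_iInf]; exact le_iInf₂ fun _ hφ => hφ.2)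

end Envelope

section MonotoneAction

variable {T L : Type*} [Group T] [Preorder L] [MulAction T L]

def OrderIso.smulOfMonotone (hmono : ∀ (t : T) (s₁ s₂ : L), s₁ ≤ s₂ → t • s₁ ≤ t • s₂)
    (t : T) : L ≃o L where
  toEquiv := MulAction.toPerm t
  map_rel_iff' {a b} :=
    ⟨fun h => by simpa using hmono t⁻¹ _ _ h, hmono t a b⟩

@[simp]
theorem OrderIso.smulOfMonotone_apply
    (hmono : ∀ (t : T) (s₁ s₂ : L), s₁ ≤ s₂ → t • s₁ ≤ t • s₂) (t : T) (a : L) :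
    OrderIso.smulOfMonotone hmono t a = t • a :=
  rfl

end MonotoneAction

section Homogeneous

variable {H T X L : Type*} [Monoid H] [Group T] [MulAction H X] [CompleteLattice L]
  [MulAction T L] {𝔥 : H →* T}

theorem IsHomog.iSup (hmono : ∀ (t : T) (s₁ s₂ : L), s₁ ≤ s₂ → t • s₁ ≤ t • s₂)
    {ι : Sort*} {φ : ι → X → L} (hφ : ∀ i, IsHomog 𝔥 (φ i)) : IsHomog 𝔥 (⨆ i, φ i) := by
  intro h x
  rw [iSup_apply, iSup_apply, ← OrderIso.smulOfMonotone_apply hmono, OrderIso.map_iSup]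
  exact iSup_congr fun i => hφ i h x

theorem IsHomog.iInf (hmono : ∀ (t : T) (s₁ s₂ : L), s₁ ≤ s₂ → t • s₁ ≤ t • s₂)
    {ι : Sort*} {φ : ι → X → L} (hφ : ∀ i, IsHomog 𝔥 (φ i)) : IsHomog 𝔥 (⨅ i, φ i) := by
  intro h x
  rw [iInf_apply, iInf_apply, ← OrderIso.smulOfMonotone_apply hmono, OrderIso.map_iInf]
  exact iInf_congr fun i => hφ i h x

theorem isHomog_lowE (hmono : ∀ (t : T) (s₁ s₂ : L), s₁ ≤ s₂ → t • s₁ ≤ t • s₂)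
    (f : X → L) : IsHomog 𝔥 (lowE {φ | IsHomog 𝔥 φ} f) := by
  rw [lowE_eq_iSup]
  exact IsHomog.iSup hmono fun _ => IsHomog.iSup hmono fun hφ => hφ.1

theorem isHomog_uppE (hmono : ∀ (t : T) (s₁ s₂ : L), s₁ ≤ s₂ → t • s₁ ≤ t • s₂)
    (f : X → L) : IsHomog 𝔥 (uppE {φ | IsHomog 𝔥 φ} f) := by
  rw [uppE_eq_iInf]
  exact IsHomog.iInf hmono fun _ => IsHomog.iInf hmono fun hφ => hφ.1

end Homogeneous

/-- **Theorem 1, group part.** If `T` is a group and `Φ` is the class of all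
`𝔥`-homogeneous functions, then for every `f : X → L` the following are
equivalent: (1) `f` is `𝔥`-homogeneous; (2) `lE_Φ f = f`; (3) `uE_Φ f = f`. -/
theorem thm1_group {H T X L : Type*} [Monoid H] [Group T] [MulAction H X]
    [CompleteLattice L] [MulAction T L] (𝔥 : H →* T)
    (hmono : ∀ (t : T) (s₁ s₂ : L), s₁ ≤ s₂ → t • s₁ ≤ t • s₂)
    (f : X → L) :
    List.TFAE [IsHomog 𝔥 f,
               lowE {φ | IsHomog 𝔥 φ} f = f,
               uppE {φ | IsHomog 𝔥 φ} f = f] := by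
  tfae_have 1 → 2 := fun hf => lowE_eq_self_of_mem hf
  tfae_have 2 → 1 := fun hf => hf ▸ isHomog_lowE hmono f
  tfae_have 1 → 3 := fun hf => uppE_eq_self_of_mem hf
  tfae_have 3 → 1 := fun hf => hf ▸ isHomog_uppE hmono f
  tfae_finish
end

section
/- Suppose in addition that H is a group. Then for every f : X → L, both the regularized minorant f∧ and the regularized majorant f∨ are 𝔥-homogeneous. (Proposition 3, group part.) -/
/-- The regularized minorant `f∧(x) := ⨅ h, (𝔥 h)⁻¹ • f (h • x)`. -/
def regMin {H T X L : Type*} [Monoid H] [Group T] [MulAction H X]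
    [CompleteLattice L] [MulAction T L] (𝔥 : H →* T) (f : X → L) : X → L :=
  fun x => ⨅ h : H, (𝔥 h)⁻¹ • f (h • x)

/-- The regularized majorant `f∨(x) := ⨆ h, (𝔥 h)⁻¹ • f (h • x)`. -/
def regMaj {H T X L : Type*} [Monoid H] [Group T] [MulAction H X]
    [CompleteLattice L] [MulAction T L] (𝔥 : H →* T) (f : X → L) : X → L :=
  fun x => ⨆ h : H, (𝔥 h)⁻¹ • f (h • x)

def smulOrderIso {T L : Type*} [Group T] [Preorder L] [MulAction T L]
    (hmono : ∀ (t : T) (s₁ s₂ : L), s₁ ≤ s₂ → t • s₁ ≤ t • s₂) (t : T) : L ≃o L :=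
  (MulAction.toPerm t).toOrderIso (hmono t) (hmono t⁻¹)

lemma inv_map_mul_inv_smul {H T X L : Type*} [Group H] [Group T] [MulAction H X]
    [MulAction T L] (𝔥 : H →* T) (f : X → L) (h g : H) (x : X) :
    (𝔥 (g * h⁻¹))⁻¹ • f ((g * h⁻¹) • h • x) = 𝔥 h • (𝔥 g)⁻¹ • f (g • x) := by
  rw [mul_smul, inv_smul_smul, map_mul, map_inv, mul_inv_rev, inv_inv, smul_smul]

section Regularization

variable {H T X L : Type*} [Group H] [Group T] [MulAction H X] [CompleteLattice L]
  [MulAction T L] (𝔥 : H →* T) (f : X → L)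

lemma regMin_smul (hmono : ∀ (t : T) (s₁ s₂ : L), s₁ ≤ s₂ → t • s₁ ≤ t • s₂) (h : H) (x : X) :
    regMin 𝔥 f (h • x) = 𝔥 h • regMin 𝔥 f x := calc
  regMin 𝔥 f (h • x) = ⨅ g : H, (𝔥 (g * h⁻¹))⁻¹ • f ((g * h⁻¹) • h • x) :=
    ((Equiv.mulRight h⁻¹).iInf_comp (g := fun g => (𝔥 g)⁻¹ • f (g • h • x))).symm
  _ = ⨅ g : H, 𝔥 h • (𝔥 g)⁻¹ • f (g • x) := by simp only [inv_map_mul_inv_smul]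
  _ = 𝔥 h • regMin 𝔥 f x := ((smulOrderIso hmono (𝔥 h)).map_iInf _).symm

lemma regMaj_smul (hmono : ∀ (t : T) (s₁ s₂ : L), s₁ ≤ s₂ → t • s₁ ≤ t • s₂) (h : H) (x : X) :
    regMaj 𝔥 f (h • x) = 𝔥 h • regMaj 𝔥 f x := calc
  regMaj 𝔥 f (h • x) = ⨆ g : H, (𝔥 (g * h⁻¹))⁻¹ • f ((g * h⁻¹) • h • x) :=
    ((Equiv.mulRight h⁻¹).iSup_comp (g := fun g => (𝔥 g)⁻¹ • f (g • h • x))).symm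
  _ = ⨆ g : H, 𝔥 h • (𝔥 g)⁻¹ • f (g • x) := by simp only [inv_map_mul_inv_smul]
  _ = 𝔥 h • regMaj 𝔥 f x := ((smulOrderIso hmono (𝔥 h)).map_iSup _).symm

end Regularization

/-- **Proposition 3, group part.** If `H` is a group, the regularized minorant
`f∧` and the regularized majorant `f∨` are `𝔥`-homogeneous. -/
theorem prop3_group {H T X L : Type*} [Group H] [Group T] [MulAction H X]
    [CompleteLattice L] [MulAction T L] (𝔥 : H →* T)
    (hmono : ∀ (t : T) (s₁ s₂ : L), s₁ ≤ s₂ → t • s₁ ≤ t • s₂)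
    (f : X → L) :
    IsHomog 𝔥 (regMin 𝔥 f) ∧ IsHomog 𝔥 (regMaj 𝔥 f) :=
  ⟨regMin_smul 𝔥 f hmono, regMaj_smul 𝔥 f hmono⟩
end
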